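/- Let n be an odd positive integer and q = 2^n. Let * be the Knuth binary presemifield multiplication and ∘ the symplectic Knuth presemifield multiplication on F_q. Let L : F_q → F_q and M : F_q → F_q be additive (F_2-linear) maps such that Tr(L(x)·y) = Tr(x·M(y)) for all x, y ∈ F_q. Then for every nonzero a ∈ F_q, the sets {y ∈ F_q : L(y) * a + y = 0} and {y ∈ F_q : a ∘ M(y) + y = 0} have the same cardinality. (This expresses that L together with a point (α) defines a translation hyperoval of type (b) in Π(K_n) if and only if the lines l_{M(m), m}, m ∈ F_q, together with l_0 and l_α form a line hyperoval in Π(K_n^{td}).) -/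

import Mathlib

/-!
For the trace form `⟨x, y⟩ = Tr (x y)` the maps `y ↦ y * a` (Knuth) and `z ↦ a ∘ z`
(symplectic Knuth) are adjoint: expanding both products, the cross terms agree because `Tr` is
`𝔽₂`-valued and `Tr (y² z) = Tr ((y √z)²) = Tr (y √z)`. Hence `y ↦ L (y * a) + y` and
`z ↦ a ∘ M z + z` are adjoint, and adjoint maps for a nondegenerate form have kernels of the same
dimension. In characteristic two these kernels are fixed-point sets, and the fixed points of
`y ↦ L y * a` are mapped bijectively by `L` onto those of `y ↦ L (y * a)`.
-/

open Module Function LinearMap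

theorem Set.ncard_fixedPoints_comp_comm {α β : Type*} (f : α → β) (g : β → α) :
    (fixedPoints (g ∘ f)).ncard = (fixedPoints (f ∘ g)).ncard :=
  (bijOn_fixedPoints_comp g f).ncard_eq

namespace LinearMap.IsAdjointPair

variable {K V : Type*} [Field K] [AddCommGroup V] [Module K V]
  {B : LinearMap.BilinForm K V} {f g : V →ₗ[K] V}

theorem ker_eq_orthogonal_range (hB : B.SeparatingRight) (h : B.IsAdjointPair B f g) :
    ker g = B.orthogonal (range f) := by
  ext y
  simp only [mem_ker, BilinForm.mem_orthogonal_iff, mem_range, forall_exists_index,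
    forall_apply_eq_imp_iff, h _ y]
  exact ⟨fun hy x => by rw [hy, map_zero], hB _⟩

variable [FiniteDimensional K V]

theorem finrank_ker_eq (hB : B.Nondegenerate) (h : B.IsAdjointPair B f g) :
    finrank K (ker g) = finrank K (ker f) := by
  rw [h.ker_eq_orthogonal_range hB.2, BilinForm.finrank_orthogonal hB]
  have := f.finrank_range_add_finrank_ker
  omega

theorem ncard_ker_eq (hB : B.Nondegenerate) (h : B.IsAdjointPair B f g) :
    (ker g : Set V).ncard = (ker f : Set V).ncard := by
  rw [← Nat.card_coe_set_eq, ← Nat.card_coe_set_eq, SetLike.coe_sort_coe, SetLike.coe_sort_coe,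
    natCard_eq_pow_finrank (K := K) (V := ker g), natCard_eq_pow_finrank (K := K) (V := ker f),
    h.finrank_ker_eq hB]

end LinearMap.IsAdjointPair

theorem LinearMap.coe_ker_add_one {V : Type*} [AddCommGroup V] [Module (ZMod 2) V]
    (f : V →ₗ[ZMod 2] V) : (ker (f + 1) : Set V) = fixedPoints f := by
  ext y
  simp only [SetLike.mem_coe, mem_ker, add_apply, add_eq_zero_iff_eq_neg,
    ZModModule.neg_eq_self]
  rfl

theorem FiniteField.charP_two_of_card_eq_two_pow {F : Type*} [Field F] [Fintype F] {n : ℕ}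
    (hF : Fintype.card F = 2 ^ n) : CharP F 2 := by
  have h := FiniteField.cast_card_eq_zero F
  rw [hF, Nat.cast_pow, Nat.cast_ofNat] at h
  exact CharTwo.of_one_ne_zero_of_two_eq_zero one_ne_zero (eq_zero_of_pow_eq_zero h)

namespace FiniteField.CharTwo

variable {F : Type*} [Field F] [CharP F 2]

attribute [local instance] ZMod.algebra

noncomputable def absTrace (x : F) : F := algebraMap (ZMod 2) F (Algebra.trace (ZMod 2) F x)

theorem absTrace_add (x y : F) : absTrace (x + y) = absTrace x + absTrace y := by
  simp only [absTrace, map_add]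

theorem absTrace_sq (x : F) : absTrace x ^ 2 = absTrace x := by
  rw [absTrace, ← map_pow, ZMod.pow_card]

theorem trace_absTrace_mul (x y : F) :
    Algebra.trace (ZMod 2) F (absTrace x * y) =
      Algebra.trace (ZMod 2) F x * Algebra.trace (ZMod 2) F y := by
  rw [absTrace, ← Algebra.smul_def, map_smul, smul_eq_mul]

noncomputable def knuthMul (x y : F) : F := x * y + (y * absTrace x + x * absTrace y) ^ 2

noncomputable def symplecticKnuthMul (x y : F) : F :=
  x * y + absTrace x * y ^ 2 ^ (finrank (ZMod 2) F - 1) + absTrace (x ^ 2 * y)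

theorem knuthMul_add_left (x y a : F) : knuthMul (x + y) a = knuthMul x a + knuthMul y a := by
  have h : a * absTrace (x + y) + (x + y) * absTrace a =
      (a * absTrace x + x * absTrace a) + (a * absTrace y + y * absTrace a) := by
    rw [absTrace_add]; ring
  rw [knuthMul, knuthMul, knuthMul, h, add_pow_char]
  ring

theorem symplecticKnuthMul_add_right (a y z : F) :
    symplecticKnuthMul a (y + z) = symplecticKnuthMul a y + symplecticKnuthMul a z := by
  simp only [symplecticKnuthMul, add_pow_char_pow, mul_add, absTrace_add]
  ring

noncomputable def knuthMulRight (a : F) : F →ₗ[ZMod 2] F :=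
  (AddMonoidHom.mk' (knuthMul · a) fun x y => knuthMul_add_left x y a).toZModLinearMap 2

noncomputable def symplecticKnuthMulLeft (a : F) : F →ₗ[ZMod 2] F :=
  (AddMonoidHom.mk' (symplecticKnuthMul a) (symplecticKnuthMul_add_right a)).toZModLinearMap 2

variable [Fintype F]

theorem card_eq_two_pow_finrank : Fintype.card F = 2 ^ finrank (ZMod 2) F := by
  rw [card_eq_pow_finrank (K := ZMod 2), ZMod.card]

theorem finrank_eq_of_card_eq_two_pow {n : ℕ} (hF : Fintype.card F = 2 ^ n) :
    finrank (ZMod 2) F = n :=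
  Nat.pow_right_injective le_rfl (card_eq_two_pow_finrank.symm.trans hF)

theorem pow_two_pow_finrank_sub_one_sq (y : F) :
    (y ^ 2 ^ (finrank (ZMod 2) F - 1)) ^ 2 = y := by
  rw [← pow_mul, ← pow_succ, Nat.sub_add_cancel finrank_pos, ← card_eq_two_pow_finrank, pow_card]

theorem absTrace_eq_sum_pow (x : F) :
    absTrace x = ∑ i ∈ Finset.range (finrank (ZMod 2) F), x ^ 2 ^ i := by
  rw [absTrace, algebraMap_trace_eq_sum_pow, Nat.card_zmod]

theorem trace_sq (x : F) : Algebra.trace (ZMod 2) F (x ^ 2) = Algebra.trace (ZMod 2) F x := by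
  simpa using Algebra.trace_eq_of_algEquiv (frobeniusAlgEquivOfAlgebraic (ZMod 2) F) x

theorem trace_symplecticKnuthMul_mul (a z y : F) :
    Algebra.trace (ZMod 2) F (symplecticKnuthMul a z * y) =
      Algebra.trace (ZMod 2) F (z * knuthMul y a) := by
  set s := z ^ 2 ^ (finrank (ZMod 2) F - 1)
  have hs : s ^ 2 = z := pow_two_pow_finrank_sub_one_sq z
  have e1 : symplecticKnuthMul a z * y =
      a * z * y + absTrace a * (y * s) + absTrace (a ^ 2 * z) * y := by
    rw [symplecticKnuthMul]; ring
  have e2 : z * knuthMul y a =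
      a * z * y + absTrace y * (a ^ 2 * z) + absTrace a * (y * s) ^ 2 := by
    rw [knuthMul, add_pow_char, mul_pow, mul_pow, absTrace_sq, absTrace_sq, mul_pow, hs]; ring
  simp only [e1, e2, map_add, trace_absTrace_mul, trace_sq]
  ring

theorem isAdjointPair_symplecticKnuthMulLeft_knuthMulRight (a : F) :
    (Algebra.traceForm (ZMod 2) F).IsAdjointPair (Algebra.traceForm (ZMod 2) F)
      (symplecticKnuthMulLeft a) (knuthMulRight a) :=
  trace_symplecticKnuthMul_mul a

end FiniteField.CharTwo

open FiniteField FiniteField.CharTwo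

theorem kernel_size_correspondence_type_b_general
    (n : ℕ)
    {F : Type*} [Field F] [Fintype F] (hF : Fintype.card F = 2 ^ n)
    (Tr : F → F) (hTr : ∀ x : F, Tr x = ∑ i ∈ Finset.range n, x ^ 2 ^ i)
    (kmul : F → F → F)
    (hkmul : ∀ x y : F, kmul x y = x * y + (y * Tr x + x * Tr y) ^ 2)
    (smul : F → F → F)
    (hsmul : ∀ x y : F, smul x y = x * y + Tr x * y ^ 2 ^ (n - 1) + Tr (x ^ 2 * y))
    (L M : F → F)
    (hL : ∀ x y : F, L (x + y) = L x + L y)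
    (hM : ∀ x y : F, M (x + y) = M x + M y)
    (hadj : ∀ x y : F, Tr (L x * y) = Tr (x * M y)) :
    ∀ a : F, a ≠ 0 → ({y : F | kmul (L y) a + y = 0}).ncard
      = ({y : F | smul a (M y) + y = 0}).ncard := by
  intro a _
  have := charP_two_of_card_eq_two_pow hF
  let := ZMod.algebra F 2
  have hrank : finrank (ZMod 2) F = n := finrank_eq_of_card_eq_two_pow hF
  obtain rfl : Tr = absTrace := funext fun x => by rw [hTr, absTrace_eq_sum_pow, hrank]
  obtain rfl : kmul = knuthMul := funext₂ hkmul
  obtain rfl : smul = symplecticKnuthMul :=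
    funext₂ fun x y => by rw [hsmul, symplecticKnuthMul, hrank]
  set B := Algebra.traceForm (ZMod 2) F
  let Lₗ := (AddMonoidHom.mk' L hL).toZModLinearMap 2
  let Mₗ := (AddMonoidHom.mk' M hM).toZModLinearMap 2
  have hML : B.IsAdjointPair B Mₗ Lₗ := fun x y => by
    change Algebra.trace (ZMod 2) F (M x * y) = Algebra.trace (ZMod 2) F (x * L y)
    rw [mul_comm, mul_comm x]
    exact (FaithfulSMul.algebraMap_injective (ZMod 2) F (hadj y x)).symm
  -- `⇑` must enclose `+ 1`: outside it, `1` would elaborate as the constant function.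
  have hG : B.IsAdjointPair B ⇑(symplecticKnuthMulLeft a ∘ₗ Mₗ + 1)
      ⇑(Lₗ ∘ₗ knuthMulRight a + 1) :=
    (hML.comp (isAdjointPair_symplecticKnuthMulLeft_knuthMulRight a)).add isAdjointPair_one
  calc ({y : F | knuthMul (L y) a + y = 0}).ncard
      = (ker (knuthMulRight a ∘ₗ Lₗ + 1) : Set F).ncard := rfl
    _ = (ker (Lₗ ∘ₗ knuthMulRight a + 1) : Set F).ncard := by
      rw [coe_ker_add_one, coe_ker_add_one]
      exact Set.ncard_fixedPoints_comp_comm Lₗ (knuthMulRight a)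
    _ = ({y : F | symplecticKnuthMul a (M y) + y = 0}).ncard :=
      hG.ncard_ker_eq (traceForm_nondegenerate _ _)

/-- Theorem 3.4 (kernel-size correspondence, type (b)):
if `L` and `M` are additive maps on `F_q` that are adjoint with respect to the trace
bilinear form, then for every nonzero `a ∈ F_q` the sets `{y : L(y)*a + y = 0}` (Knuth
multiplication `*`) and `{y : a∘M(y) + y = 0}` (symplectic multiplication `∘`) have the
same cardinality. -/
theorem kernel_size_correspondence_type_b
    (n : ℕ) (hn : Odd n) (hn0 : 0 < n)
    {F : Type*} [Field F] [Fintype F] (hF : Fintype.card F = 2 ^ n)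
    (Tr : F → F) (hTr : ∀ x : F, Tr x = ∑ i ∈ Finset.range n, x ^ 2 ^ i)
    (kmul : F → F → F)
    (hkmul : ∀ x y : F, kmul x y = x * y + (y * Tr x + x * Tr y) ^ 2)
    (smul : F → F → F)
    (hsmul : ∀ x y : F, smul x y = x * y + Tr x * y ^ 2 ^ (n - 1) + Tr (x ^ 2 * y))
    (L M : F → F)
    (hL : ∀ x y : F, L (x + y) = L x + L y)
    (hM : ∀ x y : F, M (x + y) = M x + M y)
    (hadj : ∀ x y : F, Tr (L x * y) = Tr (x * M y)) :
    ∀ a : F, a ≠ 0 → ({y : F | kmul (L y) a + y = 0}).ncard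
      = ({y : F | smul a (M y) + y = 0}).ncard :=
  kernel_size_correspondence_type_b_general n hF Tr hTr kmul hkmul smul hsmul L M hL hM hadj
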